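/- arXiv:1111.4381 — 3 statements merged into one kernel-verified Lean document; each statement's English description precedes it below -/
import Mathlib

section
/- Let D = (-1,1), f ∈ L²(D) with 0 ≤ f ≤ 1 and f not identically zero, u = Gf the solution of -u'' = f with zero boundary values, ψ(x) = (1/2)(1-x²), and h = u/ψ (extended continuously to the boundary). Let a = inf{x > -1 : ∫_{-1}^{x} f dm > 0}. Then for each y ∈ [-1, a], h(y) = (1/(1-y)) ∫_D (1-x) f(x) dx. -/
/-!
Below `a`, the mass of `f` up to any `q < a` vanishes, so `f = 0` a.e. on `(-1, a)`; and `a < 1`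
since `f` is not a.e. zero. For `x ≤ a` only the branch `x ≤ y` of the Green kernel meets the
support of `f`, so `u x = (1 + x)/2 · ∫ (1 - y) f y` is affine there. Dividing by
`ψ x = (1 - x)(1 + x)/2` gives the claim on `(-1, a]`, and at `-1` the slope of this affine
function is `u'(-1)`.
-/

open MeasureTheory Set

noncomputable def greenK (x y : ℝ) : ℝ :=
  if x ≤ y then (1/2) * (1 - y) * (1 + x) else (1/2) * (1 + y) * (1 - x)

/-- For `f ≥ 0`, the left end of the support of `f dx` in `(c, ∞)`. -/
noncomputable def massOnset (f : ℝ → ℝ) (c : ℝ) : ℝ :=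
  sInf {x : ℝ | c < x ∧ 0 < ∫ t in Ioc c x, f t}

lemma ae_restrict_Ioo_of_forall_Ioc {μ : Measure ℝ} {p : ℝ → Prop} {c a : ℝ}
    (h : ∀ q, c < q → q < a → ∀ᵐ y ∂μ.restrict (Ioc c q), p y) :
    ∀ᵐ y ∂μ.restrict (Ioo c a), p y := by
  have hUnion : Ioo c a = ⋃ q : {q : ℚ // c < q ∧ (q : ℝ) < a}, Ioc c (q : ℝ) := by
    ext x
    simp only [mem_Ioo, mem_iUnion, mem_Ioc]
    constructor
    · rintro ⟨hcx, hxa⟩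
      obtain ⟨q, hxq, hqa⟩ := exists_rat_btwn hxa
      exact ⟨⟨q, hcx.trans hxq, hqa⟩, hcx, hxq.le⟩
    · rintro ⟨⟨q, _, hqa⟩, hcx, hxq⟩
      exact ⟨hcx, lt_of_le_of_lt hxq hqa⟩
  rw [hUnion, ae_restrict_iUnion_iff]
  exact fun q ↦ h q q.2.1 q.2.2

lemma ae_restrict_eq_zero_of_setIntegral_nonpos {μ : Measure ℝ} {f : ℝ → ℝ} {s : Set ℝ}
    (hint : IntegrableOn f s μ) (hnn : 0 ≤ᵐ[μ.restrict s] f) (h : ∫ t in s, f t ∂μ ≤ 0) :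
    ∀ᵐ y ∂μ.restrict s, f y = 0 :=
  (integral_eq_zero_iff_of_nonneg_ae hnn hint).1 (h.antisymm (integral_nonneg_of_ae hnn))

section massOnset

variable {f : ℝ → ℝ} {c d : ℝ}

lemma ae_restrict_Ioo_massOnset_eq_zero (hint : IntegrableOn f (Ioo c d))
    (hnn : 0 ≤ᵐ[volume.restrict (Ioo c d)] f) (hd : massOnset f c ≤ d) :
    ∀ᵐ y ∂volume.restrict (Ioo c (massOnset f c)), f y = 0 := by
  refine ae_restrict_Ioo_of_forall_Ioc fun q hcq hqa ↦ ?_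
  have hsub : Ioc c q ⊆ Ioo c d := Ioc_subset_Ioo_right (hqa.trans_le hd)
  refine ae_restrict_eq_zero_of_setIntegral_nonpos (hint.mono_set hsub)
    (ae_restrict_of_ae_restrict_of_subset hsub hnn) (not_lt.1 fun hpos ↦ ?_)
  exact hqa.not_ge (csInf_le ⟨c, fun x hx ↦ hx.1.le⟩ ⟨hcq, hpos⟩)

lemma massOnset_lt (hcd : c < d) (hint : IntegrableOn f (Ioo c d))
    (hnn : 0 ≤ᵐ[volume.restrict (Ioo c d)] f) (hne : ¬ ∀ᵐ y ∂volume.restrict (Ioo c d), f y = 0) :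
    massOnset f c < d := by
  have hpos : 0 < ∫ t in Ioc c d, f t := by
    rw [integral_Ioc_eq_integral_Ioo]
    exact (not_le.1 fun h ↦ hne (ae_restrict_eq_zero_of_setIntegral_nonpos hint hnn h))
  have hle : massOnset f c ≤ d := csInf_le ⟨c, fun x hx ↦ hx.1.le⟩ ⟨hcd, hpos⟩
  refine hle.lt_of_ne fun heq ↦ hne ?_
  simpa only [heq] using ae_restrict_Ioo_massOnset_eq_zero hint hnn hle

end massOnset

lemma setIntegral_greenK_mul_of_le {f : ℝ → ℝ} {a x : ℝ}
    (hzero : ∀ᵐ y ∂volume.restrict (Ioo (-1) a), f y = 0) (hx : x ≤ a) :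
    ∫ y in Ioo (-1 : ℝ) 1, greenK x y * f y
      = (1/2) * (1 + x) * ∫ y in Ioo (-1 : ℝ) 1, (1 - y) * f y := by
  rw [← integral_const_mul]
  have hzero' := (ae_restrict_iff' measurableSet_Ioo).1 hzero
  refine integral_congr_ae ?_
  filter_upwards [ae_restrict_of_ae hzero', ae_restrict_mem measurableSet_Ioo] with y hfy hy
  by_cases hxy : x ≤ y
  · simp only [greenK, if_pos hxy]
    ring
  · simp [hfy ⟨hy.1, (not_le.1 hxy).trans_le hx⟩]

lemma HasDerivAt.eq_of_eqOn_Iic {u g : ℝ → ℝ} {u' g' a x : ℝ} (hu : HasDerivAt u u' x)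
    (hg : HasDerivAt g g' x) (heq : EqOn u g (Iic a)) (hx : x ≤ a) : u' = g' :=
  (uniqueDiffOn_Iic a x hx).eq_deriv _ hu.hasDerivWithinAt
    (hg.hasDerivWithinAt.congr heq (heq hx))

theorem stmt_8 (f u v h : ℝ → ℝ) (hmeas : Measurable f)
    (hf0 : ∀ x ∈ Set.Ioo (-1 : ℝ) 1, 0 ≤ f x ∧ f x ≤ 1)
    (hfne : ¬ (∀ᵐ x ∂(MeasureTheory.volume.restrict (Set.Ioo (-1 : ℝ) 1)), f x = 0))
    (hu : ∀ x, u x = ∫ y in Set.Ioo (-1 : ℝ) 1, greenK x y * f y)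
    (hv : ∀ x ∈ Set.Icc (-1 : ℝ) 1, HasDerivAt u (v x) x)
    (hh : ∀ x, h x = if x = -1 then v (-1) else if x = 1 then -(v 1)
          else u x / ((1/2) * (1 - x^2)))
    (a : ℝ) (ha : a = sInf {x : ℝ | -1 < x ∧ 0 < ∫ t in Set.Ioc (-1 : ℝ) x, f t}) :
    ∀ y ∈ Set.Icc (-1 : ℝ) a,
      h y = (1 / (1 - y)) * ∫ x in Set.Ioo (-1 : ℝ) 1, (1 - x) * f x := by
  change a = massOnset f (-1) at ha
  set C := ∫ x in Ioo (-1 : ℝ) 1, (1 - x) * f x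
  have hf0' : ∀ᵐ x ∂volume.restrict (Ioo (-1 : ℝ) 1), 0 ≤ f x ∧ f x ≤ 1 :=
    (ae_restrict_iff' measurableSet_Ioo).2 (Filter.Eventually.of_forall hf0)
  have hnn : 0 ≤ᵐ[volume.restrict (Ioo (-1 : ℝ) 1)] f := hf0'.mono fun _ hx ↦ hx.1
  have hint : IntegrableOn f (Ioo (-1 : ℝ) 1) :=
    Measure.integrableOn_of_bounded measure_Ioo_lt_top.ne hmeas.aestronglyMeasurable
      (M := 1) (hf0'.mono fun _ hx ↦ by rw [Real.norm_of_nonneg hx.1]; exact hx.2)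
  have ha1 : a < 1 := ha ▸ massOnset_lt (by norm_num) hint hnn hfne
  have hzero := ha ▸ ae_restrict_Ioo_massOnset_eq_zero hint hnn (ha ▸ ha1.le)
  have hu_affine : EqOn u (fun x ↦ (1/2) * (1 + x) * C) (Iic a) := fun x hx ↦
    (hu x).trans (setIntegral_greenK_mul_of_le hzero hx)
  rintro y ⟨hy1, hya⟩
  rw [hh y]
  rcases hy1.eq_or_lt with rfl | hy_gt
  · have hslope : HasDerivAt (fun x ↦ (1/2) * (1 + x) * C) ((1/2) * C) (-1) := by
      simpa using (((hasDerivAt_id (-1 : ℝ)).const_add 1).const_mul (1/2 : ℝ)).mul_const C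
    rw [if_pos rfl, (hv (-1) (by norm_num)).eq_of_eqOn_Iic hslope hu_affine hya]
    norm_num
  · have hy_ne : y ≠ 1 := (hya.trans_lt ha1).ne
    rw [if_neg hy_gt.ne', if_neg hy_ne, hu_affine hya]
    have hsub : 1 - y ≠ 0 := sub_ne_zero.2 hy_ne.symm
    have hadd : 1 + y ≠ 0 := by linarith
    rw [show (1 : ℝ) - y ^ 2 = (1 - y) * (1 + y) by ring]
    field_simp
end

section
/- Let 0 < a₁ < b₁ < 1 and let u = G χ_{(a₁,b₁)} be the solution of -u'' = χ_{(a₁,b₁)} on D = (-1,1) with zero boundary values, and h = u/ψ with ψ(x) = (1/2)(1-x²). Then h(b₁) > h(a₁). Explicitly, h(a₁) = ((b₁-a₁)/(1-a₁))(1 - (a₁+b₁)/2) and h(b₁) = ((b₁-a₁)/(1+b₁))(1 + (a₁+b₁)/2), and the latter is strictly larger. -/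
/-! Outside the support of `χ_(a,b)` only one branch of the kernel is active, so the Green
potential is linear in `x` there: at `x ≤ a` it is `(1 + x)/2 · ∫_a^b (1 - y) dy`, at `x ≥ b` it is
`(1 - x)/2 · ∫_a^b (1 + y) dy`. Dividing by `ψ = (1 + x)(1 - x)/2` cancels one factor, and the
difference of the two resulting values is `(a + b)(b - a)²/2` over a positive denominator. -/

open MeasureTheory Set

lemma setIntegral_mul_indicator_one_of_subset {s t : Set ℝ} (hs : MeasurableSet s) (hst : s ⊆ t)
    (f : ℝ → ℝ) : ∫ y in t, f y * s.indicator 1 y = ∫ y in s, f y := by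
  simp_rw [← indicator_mul_right, Pi.one_apply, mul_one]
  rw [setIntegral_indicator hs, inter_eq_right.mpr hst]

lemma setIntegral_Ioo_eq_intervalIntegral {a b : ℝ} (hab : a ≤ b) (f : ℝ → ℝ) :
    ∫ y in Ioo a b, f y = ∫ y in a..b, f y := by
  rw [intervalIntegral.integral_of_le hab, integral_Ioc_eq_integral_Ioo]

lemma setIntegral_greenK_of_le {a b x : ℝ} (hab : a ≤ b) (hx : x ≤ a) :
    ∫ y in Ioo a b, greenK x y = (1 + x) / 2 * ((b - a) * (1 - (a + b) / 2)) := by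
  have hK : EqOn (greenK x) (fun y => (1 + x) / 2 * (1 - y)) (Ioo a b) := fun y hy => by
    rw [greenK, if_pos (hx.trans hy.1.le)]; ring
  rw [setIntegral_congr_fun measurableSet_Ioo hK, setIntegral_Ioo_eq_intervalIntegral hab,
    intervalIntegral.integral_const_mul, intervalIntegral.integral_sub intervalIntegrable_const
      intervalIntegral.intervalIntegrable_id, integral_id, intervalIntegral.integral_const]
  simp only [smul_eq_mul]
  ring

lemma setIntegral_greenK_of_ge {a b x : ℝ} (hab : a ≤ b) (hx : b ≤ x) :
    ∫ y in Ioo a b, greenK x y = (1 - x) / 2 * ((b - a) * (1 + (a + b) / 2)) := by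
  have hK : EqOn (greenK x) (fun y => (1 - x) / 2 * (1 + y)) (Ioo a b) := fun y hy => by
    rw [greenK, if_neg (not_le.mpr (hy.2.trans_le hx))]; ring
  rw [setIntegral_congr_fun measurableSet_Ioo hK, setIntegral_Ioo_eq_intervalIntegral hab,
    intervalIntegral.integral_const_mul, intervalIntegral.integral_add intervalIntegrable_const
      intervalIntegral.intervalIntegrable_id, integral_id, intervalIntegral.integral_const]
  simp only [smul_eq_mul]
  ring

lemma sub_div_one_sub_mul_lt_sub_div_one_add_mul {a b : ℝ} (hab : a < b) (hb : b < 1)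
    (hs : 0 < a + b) :
    (b - a) / (1 - a) * (1 - (a + b) / 2) < (b - a) / (1 + b) * (1 + (a + b) / 2) := by
  rw [div_mul_eq_mul_div, div_mul_eq_mul_div, div_lt_div_iff₀ (by linarith) (by linarith)]
  nlinarith [mul_pos (sub_pos.mpr hab) (mul_pos hs (sub_pos.mpr hab))]

theorem stmt_10 (a₁ b₁ : ℝ) (ha : 0 < a₁) (hab : a₁ < b₁) (hb : b₁ < 1)
    (u h : ℝ → ℝ)
    (hu : ∀ x, u x = ∫ y in Set.Ioo (-1 : ℝ) 1,
            greenK x y * Set.indicator (Set.Ioo a₁ b₁) 1 y)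
    (hh : ∀ x ∈ Set.Ioo (-1 : ℝ) 1, h x = u x / ((1/2) * (1 - x^2))) :
    h a₁ = ((b₁ - a₁) / (1 - a₁)) * (1 - (a₁ + b₁) / 2) ∧
    h b₁ = ((b₁ - a₁) / (1 + b₁)) * (1 + (a₁ + b₁) / 2) ∧
    h a₁ < h b₁ := by
  have hsub : Ioo a₁ b₁ ⊆ Ioo (-1 : ℝ) 1 := Ioo_subset_Ioo (by linarith) hb.le
  have hu' : ∀ x, u x = ∫ y in Ioo a₁ b₁, greenK x y := fun x => by
    rw [hu, setIntegral_mul_indicator_one_of_subset measurableSet_Ioo hsub]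
  have hA : h a₁ = (b₁ - a₁) / (1 - a₁) * (1 - (a₁ + b₁) / 2) := by
    rw [hh a₁ ⟨by linarith, by linarith⟩, hu', setIntegral_greenK_of_le hab.le le_rfl,
      show (1 / 2) * (1 - a₁ ^ 2) = (1 + a₁) / 2 * (1 - a₁) by ring,
      mul_div_mul_left _ _ (by linarith), mul_div_right_comm]
  have hB : h b₁ = (b₁ - a₁) / (1 + b₁) * (1 + (a₁ + b₁) / 2) := by
    rw [hh b₁ ⟨by linarith, hb⟩, hu', setIntegral_greenK_of_ge hab.le le_rfl,
      show (1 / 2) * (1 - b₁ ^ 2) = (1 - b₁) / 2 * (1 + b₁) by ring,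
      mul_div_mul_left _ _ (by linarith), mul_div_right_comm]
  refine ⟨hA, hB, ?_⟩
  rw [hA, hB]
  exact sub_div_one_sub_mul_lt_sub_div_one_add_mul hab hb (by linarith)
end

section
/- Let D = (-1,1), G the Green operator of the Dirichlet Laplacian, ψ = Gχ_D, and for an open set A ⊆ D let f = (−(λ+1))χ_A + (1−λ)χ_{D∖A} for λ ∈ (-1,1), and u = Gf. If ∫_D u dm = 0, then (ψ, χ_A) = ((1−λ)/2)(ψ, 1), and ∫_{D∖A} u dm = 2(ψ,1)^{-1}[(ψ,1)(Gχ_A, χ_A) − (ψ, χ_A)²] = 2(Gχ_A,χ_A) − (1/3)(1−λ)². -/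
/-! On `D = (-1, 1)` the source is `f = (1 - λ) - 2 χ_A` and `G 1 = ψ = (1 - x²)/2`, so
`u = (1 - λ) ψ - 2 G χ_A`. Symmetry of the kernel gives `(G χ_A, 1) = (χ_A, ψ)`, hence flux
balance reads `(1 - λ)(ψ, 1) = 2 (ψ, χ_A)`, i.e. `(ψ, χ_A) = (1 - λ)/3`. Finally
`∫_{D∖A} u = -∫_A u = 2 (G χ_A, χ_A) - (1 - λ)(ψ, χ_A)`. -/

open Classical

open MeasureTheory Set Function Bornology

lemma Continuous.integrableOn_of_isBounded {X E : Type*} [MetricSpace X] [ProperSpace X]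
    [MeasurableSpace X] [OpensMeasurableSpace X] [NormedAddCommGroup E] {μ : Measure X}
    [IsFiniteMeasureOnCompacts μ] {f : X → E} (hf : Continuous f) {s : Set X}
    (hs : IsBounded s) : IntegrableOn f s μ :=
  (hf.continuousOn.integrableOn_compact hs.isCompact_closure).mono_set subset_closure

lemma greenK_eq_max_min (x y : ℝ) : greenK x y = 1/2 * (1 - max x y) * (1 + min x y) := by
  unfold greenK
  rcases le_or_gt x y with h | h
  · rw [if_pos h, max_eq_right h, min_eq_left h]
  · rw [if_neg h.not_ge, max_eq_left h.le, min_eq_right h.le]; ring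

lemma greenK_comm (x y : ℝ) : greenK x y = greenK y x := by
  rw [greenK_eq_max_min, greenK_eq_max_min, max_comm, min_comm]

lemma continuous_greenK : Continuous (uncurry greenK) := by
  simp only [uncurry_def, greenK_eq_max_min]; fun_prop

lemma continuous_greenK_right (x : ℝ) : Continuous (greenK x) :=
  continuous_greenK.comp (.prodMk_right x)

lemma integrable_greenK_prod {s t : Set ℝ} (hs : IsBounded s) (ht : IsBounded t) :
    Integrable (uncurry greenK) ((volume.restrict s).prod (volume.restrict t)) := by
  rw [Measure.prod_restrict, ← Measure.volume_eq_prod]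
  exact continuous_greenK.integrableOn_of_isBounded (hs.prod ht)

lemma integrableOn_setIntegral_greenK {s t : Set ℝ} (hs : IsBounded s) (ht : IsBounded t) :
    IntegrableOn (fun x => ∫ y in t, greenK x y) s :=
  (integrable_greenK_prod hs ht).integral_prod_left

lemma setIntegral_setIntegral_greenK_comm {s t : Set ℝ} (hs : IsBounded s) (ht : IsBounded t) :
    ∫ x in s, ∫ y in t, greenK x y = ∫ x in t, ∫ y in s, greenK x y := by
  simp_rw [integral_integral_swap (integrable_greenK_prod hs ht), greenK_comm]

lemma integral_greenK_Ioo {x : ℝ} (hx : x ∈ Icc (-1 : ℝ) 1) :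
    ∫ y in Ioo (-1 : ℝ) 1, greenK x y = 1/2 * (1 - x^2) := by
  have hcont := continuous_greenK_right x
  rw [← integral_Ioc_eq_integral_Ioo, ← intervalIntegral.integral_of_le (by norm_num),
    ← intervalIntegral.integral_add_adjacent_intervals (b := x)
      (hcont.intervalIntegrable _ _) (hcont.intervalIntegrable _ _)]
  have left :
      ∫ y in (-1 : ℝ)..x, greenK x y = ∫ y in (-1 : ℝ)..x, 1/2 * (1 - x) * (1 + y) := by
    refine intervalIntegral.integral_congr fun y hy => ?_
    rw [uIcc_of_le hx.1] at hy
    rw [greenK_eq_max_min, max_eq_left hy.2, min_eq_right hy.2]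
  have right :
      ∫ y in x..(1 : ℝ), greenK x y = ∫ y in x..(1 : ℝ), 1/2 * (1 + x) * (1 - y) := by
    refine intervalIntegral.integral_congr fun y hy => ?_
    rw [uIcc_of_le hx.2] at hy
    rw [greenK_eq_max_min, max_eq_right hy.1, min_eq_left hy.1]; ring
  rw [left, right, intervalIntegral.integral_const_mul, intervalIntegral.integral_const_mul]
  simp only [intervalIntegral.integral_comp_add_left (fun y => y),
    intervalIntegral.integral_comp_sub_left (fun y => y), integral_id]
  ring

lemma integral_Ioo_half_mul_one_sub_sq : ∫ x in Ioo (-1 : ℝ) 1, 1/2 * (1 - x^2) = 2/3 := by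
  rw [← integral_Ioc_eq_integral_Ioo, ← intervalIntegral.integral_of_le (by norm_num)]
  norm_num [integral_id]

lemma integral_greenK_mul_piecewise {s A : Set ℝ} (hs : MeasurableSet s) (hA : MeasurableSet A)
    (hAs : A ⊆ s) {a b : ℝ} {f : ℝ → ℝ} (hf : ∀ y ∈ s, f y = if y ∈ A then a else b)
    {x : ℝ} (hint : IntegrableOn (greenK x) s) :
    ∫ y in s, greenK x y * f y
      = b * (∫ y in s, greenK x y) + (a - b) * ∫ y in A, greenK x y := by
  have split : ∀ y ∈ s,
      greenK x y * f y = b * greenK x y + (a - b) * A.indicator (greenK x) y := by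
    intro y hy
    by_cases hyA : y ∈ A <;> simp [hf y hy, hyA] <;> ring
  rw [setIntegral_congr_fun hs split, integral_add (hint.const_mul b)
    ((hint.indicator hA).const_mul _), integral_const_mul, integral_const_mul,
    setIntegral_indicator hA, inter_eq_self_of_subset_right hAs]

lemma integrableOn_half_mul_one_sub_sq {s : Set ℝ} (hs : IsBounded s) :
    IntegrableOn (fun x : ℝ => 1/2 * (1 - x^2)) s :=
  Continuous.integrableOn_of_isBounded (by fun_prop) hs

lemma setIntegral_Ioo_setIntegral_greenK {A : Set ℝ} (hA : MeasurableSet A)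
    (hAD : A ⊆ Ioo (-1 : ℝ) 1) :
    ∫ x in Ioo (-1 : ℝ) 1, ∫ y in A, greenK x y = ∫ x in A, 1/2 * (1 - x^2) := by
  rw [setIntegral_setIntegral_greenK_comm (Metric.isBounded_Ioo _ _)
    ((Metric.isBounded_Ioo _ _).subset hAD)]
  exact setIntegral_congr_fun hA fun x hx => integral_greenK_Ioo (Ioo_subset_Icc_self (hAD hx))

lemma integrableOn_mul_sub_mul_setIntegral_greenK {s t : Set ℝ} (hs : IsBounded s)
    (ht : IsBounded t) (c d : ℝ) :
    IntegrableOn (fun x => c * (1/2 * (1 - x^2)) - d * ∫ y in t, greenK x y) s :=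
  ((integrableOn_half_mul_one_sub_sq hs).const_mul c).sub
    ((integrableOn_setIntegral_greenK hs ht).const_mul d)

lemma setIntegral_mul_sub_mul_setIntegral_greenK {s t : Set ℝ} (hs : IsBounded s)
    (ht : IsBounded t) (c d : ℝ) :
    ∫ x in s, (c * (1/2 * (1 - x^2)) - d * ∫ y in t, greenK x y)
      = c * (∫ x in s, 1/2 * (1 - x^2)) - d * ∫ x in s, ∫ y in t, greenK x y := by
  rw [integral_sub ((integrableOn_half_mul_one_sub_sq hs).const_mul c)
    ((integrableOn_setIntegral_greenK hs ht).const_mul d), integral_const_mul c,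
    integral_const_mul d]

theorem stmt_19_general (A : Set ℝ) (hA : IsOpen A) (hAD : A ⊆ Set.Ioo (-1 : ℝ) 1)
    (l : ℝ) (f u : ℝ → ℝ)
    (hf : ∀ x ∈ Set.Ioo (-1 : ℝ) 1, f x = if x ∈ A then -(l + 1) else 1 - l)
    (hu : ∀ x, u x = ∫ y in Set.Ioo (-1 : ℝ) 1, greenK x y * f y)
    (hflux : (∫ x in Set.Ioo (-1 : ℝ) 1, u x) = 0) :
    (∫ x in A, (1/2) * (1 - x^2)) = ((1 - l) / 2) * (2/3) ∧
    (∫ x in Set.Ioo (-1 : ℝ) 1 \ A, u x) =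
      2 * (2/3 : ℝ)⁻¹ * ((2/3) * (∫ x in A, ∫ y in A, greenK x y)
        - (∫ x in A, (1/2) * (1 - x^2))^2) ∧
    (∫ x in Set.Ioo (-1 : ℝ) 1 \ A, u x) =
      2 * (∫ x in A, ∫ y in A, greenK x y) - (1/3) * (1 - l)^2 := by
  set D := Ioo (-1 : ℝ) 1
  have hDb : IsBounded D := Metric.isBounded_Ioo _ _
  have hAb : IsBounded A := hDb.subset hAD
  have hAm := hA.measurableSet
  have hu_eq : EqOn u (fun x => (1 - l) * (1/2 * (1 - x^2)) - 2 * ∫ y in A, greenK x y) D := by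
    intro x hx
    rw [hu, integral_greenK_mul_piecewise measurableSet_Ioo hAm hAD hf
      ((continuous_greenK_right x).integrableOn_of_isBounded hDb),
      integral_greenK_Ioo (Ioo_subset_Icc_self hx)]
    ring
  have hψA : ∫ x in A, 1/2 * (1 - x^2) = (1 - l) / 3 := by
    rw [setIntegral_congr_fun measurableSet_Ioo hu_eq,
      setIntegral_mul_sub_mul_setIntegral_greenK hDb hAb, integral_Ioo_half_mul_one_sub_sq,
      setIntegral_Ioo_setIntegral_greenK hAm hAD] at hflux
    linarith
  have hu_int : IntegrableOn u D :=
    (integrableOn_mul_sub_mul_setIntegral_greenK hDb hAb _ _).congr_fun hu_eq.symm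
      measurableSet_Ioo
  have hcompl :
      ∫ x in D \ A, u x = 2 * (∫ x in A, ∫ y in A, greenK x y) - 1/3 * (1 - l)^2 := by
    rw [setIntegral_sdiff hAm hu_int hAD, hflux, setIntegral_congr_fun hAm (hu_eq.mono hAD),
      setIntegral_mul_sub_mul_setIntegral_greenK hAb hAb, hψA]
    ring
  exact ⟨by rw [hψA]; ring, by rw [hcompl, hψA]; ring, hcompl⟩

theorem stmt_19 (A : Set ℝ) (hA : IsOpen A) (hAD : A ⊆ Set.Ioo (-1 : ℝ) 1)
    (l : ℝ) (hl : l ∈ Set.Ioo (-1 : ℝ) 1) (f u : ℝ → ℝ)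
    (hf : ∀ x ∈ Set.Ioo (-1 : ℝ) 1, f x = if x ∈ A then -(l + 1) else 1 - l)
    (hu : ∀ x, u x = ∫ y in Set.Ioo (-1 : ℝ) 1, greenK x y * f y)
    (hflux : (∫ x in Set.Ioo (-1 : ℝ) 1, u x) = 0) :
    (∫ x in A, (1/2) * (1 - x^2)) = ((1 - l) / 2) * (2/3) ∧
    (∫ x in Set.Ioo (-1 : ℝ) 1 \ A, u x) =
      2 * (2/3 : ℝ)⁻¹ * ((2/3) * (∫ x in A, ∫ y in A, greenK x y)
        - (∫ x in A, (1/2) * (1 - x^2))^2) ∧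
    (∫ x in Set.Ioo (-1 : ℝ) 1 \ A, u x) =
      2 * (∫ x in A, ∫ y in A, greenK x y) - (1/3) * (1 - l)^2 :=
  stmt_19_general A hA hAD l f u hf hu hflux
end
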